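/- If φ ∈ H^∞ is saturated, then I·φ is saturated for any inner function I. -/

import Mathlib

/-!
Setting: the unit circle `𝕋 = ℝ/2πℤ` with normalized Lebesgue arc length (Haar) measure `μ`.
`H^p` is the Hardy space of `L^p` functions whose Fourier coefficients are supported on the
nonnegative integers.
-/

open MeasureTheory Complex Topology Filter Set
open scoped ENNReal ComplexConjugate Real

noncomputable section

/-- The circle `ℝ/2πℤ`, i.e. the unit circle parametrized by angle. -/
abbrev UnitCircle : Type := AddCircle (2 * Real.pi)

instance : Fact (0 < 2 * Real.pi) := ⟨Real.two_pi_pos⟩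

/-- Normalized Lebesgue arc length measure on the unit circle. -/
local notation "μ" => (AddCircle.haarAddCircle : Measure UnitCircle)

/-- The point `e^{iθ}` of the complex unit circle corresponding to the angle `θ : ℝ/2πℤ`. -/
def bdryPt (x : UnitCircle) : ℂ := (AddCircle.toCircle x : ℂ)

/-- Membership in the Hardy space `H^p`: an `L^p` function on the circle whose Fourier
coefficients are supported on the nonnegative integers. -/
def MemHardy (p : ℝ≥0∞) (f : UnitCircle → ℂ) : Prop :=
  MemLp f p μ ∧ ∀ n : ℤ, n < 0 → fourierCoeff f n = 0

/-- A function `φ ∈ H^∞` is *saturated* if `‖φ‖_∞ = inf_{f ∈ H^∞_0} ‖φ - conj f‖_∞`, where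
`H^∞_0` consists of the functions of `H^∞` vanishing at the origin (zeroth Fourier
coefficient zero). -/
def Saturated (φ : UnitCircle → ℂ) : Prop :=
  eLpNorm φ ⊤ μ =
    ⨅ (f : UnitCircle → ℂ) (_ : MemHardy ⊤ f ∧ fourierCoeff f 0 = 0),
      eLpNorm (fun x => φ x - conj (f x)) ⊤ μ

/-- Fourier coefficients only depend on the a.e. class. -/
lemma fourierCoeff_congr_ae' {f g : UnitCircle → ℂ} (h : f =ᵐ[μ] g) (n : ℤ) :
    fourierCoeff f n = fourierCoeff g n :=
  integral_congr_ae (h.mono fun x hx => by simp only [hx])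

lemma norm_fourier_eq_one (n : ℤ) (x : UnitCircle) : ‖fourier n x‖ = 1 := by
  rw [fourier_apply]; exact Circle.norm_coe _

lemma fourierCoeff_conj' (h : UnitCircle → ℂ) (i : ℤ) :
    fourierCoeff (fun x => conj (h x)) i = conj (fourierCoeff h (-i)) := by
  unfold fourierCoeff
  rw [← integral_conj]
  congr 1
  ext x
  simp only [smul_eq_mul, map_mul, Complex.conj_conj, neg_neg, fourier_neg, mul_comm]

lemma fourierCoeff_fourier_mul' (f : UnitCircle → ℂ) (n m : ℤ) :
    fourierCoeff (fun x => fourier (-n) x * f x) m = fourierCoeff f (m + n) := by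
  unfold fourierCoeff
  congr 1
  ext x
  simp only [smul_eq_mul, ← mul_assoc, ← fourier_add]
  congr 2
  ring

/-- Key computation: if `Ib ∈ H²` and `f ∈ H^∞` with `f̂(0) = 0`, then the Fourier
coefficients of the product `Ib * f` vanish for all indices `n ≤ 0`. -/
lemma coeff_vanish (Ib f : UnitCircle → ℂ) (hI : MemHardy 2 Ib) (hf : MemHardy ⊤ f)
    (hf0 : fourierCoeff f 0 = 0) {n : ℤ} (hn : n ≤ 0) :
    fourierCoeff (fun x => Ib x * f x) n = 0 := by
  set g : UnitCircle → ℂ := fun x => conj (fourier (-n) x * f x) with hg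
  have hfm : AEStronglyMeasurable f μ := hf.1.aestronglyMeasurable
  have hgm : AEStronglyMeasurable g μ :=
    (Complex.continuous_conj.comp_aestronglyMeasurable
      (((fourier (-n)).continuous.aestronglyMeasurable).mul hfm))
  have hgnorm : ∀ x, ‖g x‖ = ‖f x‖ := fun x => by
    simp [hg, norm_fourier_eq_one, Circle.norm_coe]
  have hf2 : MemLp f 2 μ := hf.1.mono_exponent le_top
  have hg2 : MemLp g 2 μ := by
    refine ⟨hgm, ?_⟩
    rw [eLpNorm_congr_norm_ae (Eventually.of_forall hgnorm)]
    exact hf2.2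
  set G : Lp ℂ 2 μ := hI.1.toLp Ib with hG
  set A : Lp ℂ 2 μ := hg2.toLp g with hA
  have hGae : (G : UnitCircle → ℂ) =ᵐ[μ] Ib := hI.1.coeFn_toLp
  have hAae : (A : UnitCircle → ℂ) =ᵐ[μ] g := hg2.coeFn_toLp
  have key : fourierCoeff (fun x => Ib x * f x) n = @inner ℂ _ _ A G := by
    rw [MeasureTheory.L2.inner_def]
    unfold fourierCoeff
    refine integral_congr_ae ?_
    filter_upwards [hGae, hAae] with x hGx hAx
    simp only [hGx, hAx, hg, RCLike.inner_apply, map_mul, Complex.conj_conj, smul_eq_mul]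
    ring
  rw [key, ← fourierBasis.tsum_inner_mul_inner A G]
  have hterm : ∀ i : ℤ,
      (@inner ℂ _ _ A (fourierBasis i)) * (@inner ℂ _ _ (fourierBasis i) G) = 0 := by
    intro i
    have hGi : (@inner ℂ _ _ (fourierBasis i) G) = fourierCoeff Ib i := by
      rw [← fourierBasis.repr_apply_apply, fourierBasis_repr]
      exact fourierCoeff_congr_ae' hGae i
    have hAi : (@inner ℂ _ _ (fourierBasis i) A) = fourierCoeff g i := by
      rw [← fourierBasis.repr_apply_apply, fourierBasis_repr]
      exact fourierCoeff_congr_ae' hAae i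
    have hAi' : (@inner ℂ _ _ A (fourierBasis i)) = conj (fourierCoeff g i) := by
      rw [← inner_conj_symm, hAi]
    have hgcoeff : fourierCoeff g i = conj (fourierCoeff f (-i + n)) := by
      rw [hg, fourierCoeff_conj', fourierCoeff_fourier_mul']
    rcases lt_or_ge i 0 with hi | hi
    · rw [hGi, hI.2 i hi, mul_zero]
    · rw [hAi', hgcoeff, Complex.conj_conj]
      rcases eq_or_lt_of_le (by omega : -i + n ≤ 0) with h0 | h0
      · rw [h0, hf0, zero_mul]
      · rw [hf.2 _ h0, zero_mul]
  rw [tsum_congr hterm, tsum_zero]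

/-- If `Ib` is inner (in `H²`, modulus one a.e.) and `f ∈ H^∞_0`, then `Ib * f ∈ H^∞_0`. -/
lemma hardy_mul (Ib f : UnitCircle → ℂ) (hI : MemHardy 2 Ib) (hI1 : ∀ᵐ x ∂μ, ‖Ib x‖ = 1)
    (hf : MemHardy ⊤ f) (hf0 : fourierCoeff f 0 = 0) :
    MemHardy ⊤ (fun x => Ib x * f x) ∧ fourierCoeff (fun x => Ib x * f x) 0 = 0 := by
  refine ⟨⟨⟨hI.1.aestronglyMeasurable.mul hf.1.aestronglyMeasurable, ?_⟩,
    fun n hn => coeff_vanish Ib f hI hf hf0 hn.le⟩, coeff_vanish Ib f hI hf hf0 le_rfl⟩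
  have he : eLpNorm (fun x => Ib x * f x) ⊤ μ = eLpNorm f ⊤ μ :=
    eLpNorm_congr_norm_ae (hI1.mono fun x hx => by rw [norm_mul, hx, one_mul])
  rw [he]
  exact hf.1.2

/-- **Lemma 2.** If `φ ∈ H^∞` is saturated, then so is `I·φ` for any inner function `I`. -/
theorem saturated_inner_mul (φ Ib : UnitCircle → ℂ) (hφ : MemHardy ⊤ φ)
    (hsat : Saturated φ) (hI : MemHardy 2 Ib) (hI1 : ∀ᵐ x ∂μ, ‖Ib x‖ = 1) :
    Saturated fun x => Ib x * φ x := by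
  have hnorm : eLpNorm (fun x => Ib x * φ x) ⊤ μ = eLpNorm φ ⊤ μ :=
    eLpNorm_congr_norm_ae (hI1.mono fun x hx => by rw [norm_mul, hx, one_mul])
  refine le_antisymm ?_ ?_
  · refine le_iInf₂ fun f hf => ?_
    rw [hnorm, hsat]
    refine le_trans (iInf₂_le (fun x => Ib x * f x) (hardy_mul Ib f hI hI1 hf.1 hf.2)) ?_
    refine le_of_eq (eLpNorm_congr_norm_ae ?_)
    filter_upwards [hI1] with x hx
    have h1 : Complex.normSq (Ib x) = 1 := by
      rw [Complex.normSq_eq_norm_sq, hx, one_pow]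
    have h2 : Ib x * φ x - conj (f x) = Ib x * (φ x - conj (Ib x * f x)) := by
      rw [map_mul, mul_sub, ← mul_assoc, Complex.mul_conj, h1, Complex.ofReal_one, one_mul]
    rw [h2, norm_mul, hx, one_mul]
  · refine le_trans (iInf₂_le (0 : UnitCircle → ℂ) ?_) ?_
    · exact ⟨⟨MemLp.zero, fun n _ => by simp [fourierCoeff]⟩, by simp [fourierCoeff]⟩
    · simp
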